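/- There exists a constant K > 0 such that for every positive integer N and every C¹ map u : ℂ → ℂⁿ with compact support contained in D \ {0}, one has ∫_D ‖∂u/∂z̄(z)‖² |z|^{−2N} dA ≥ K ∫_D ‖u(z)‖² |z|^{−2N} dA, where dA is Lebesgue measure on ℂ; the constant K does not depend on N. -/

import Mathlib

open Complex MeasureTheory Metric Filter Topology

/-- The Wirtinger derivative `∂u/∂z̄ = (1/2)(∂u/∂x + i • ∂u/∂y)`. -/
noncomputable def dbar {E : Type*} [NormedAddCommGroup E] [NormedSpace ℂ E]
    (u : ℂ → E) (z : ℂ) : E :=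
  (2⁻¹ : ℝ) • (fderiv ℝ u z 1 + Complex.I • fderiv ℝ u z Complex.I)

/-!
For `v = z⁻ᴺ • u` we have `∂̄v = z⁻ᴺ • ∂̄u` (the factor is holomorphic off `0`, and `v` vanishes
near `0`) and `‖z⁻ᴺ • w‖² = ‖w‖² / |z|²ᴺ`, so the weighted inequality for `u` is the unweighted
inequality `∫ ‖v‖² ≤ 16 ∫ ‖∂̄v‖²` for a `C¹` map `v` with compact support in the unit disc; the
weight, and with it `N`, disappears.

The unweighted inequality has three steps. Integrating `∂ₓ (x ‖v‖²)` gives the Poincaré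
inequality `∫ ‖v‖² ≤ 4 ∫ ‖∂ₓv‖²`; next `∂ₓ = ∂ + ∂̄`; finally `∫ ‖∂v‖² = ∫ ‖∂̄v‖²`, as the
difference of the two sides is `-∫ Im ⟪∂ₓv, ∂ᵧv⟫`, which vanishes because `∫ B (∂ₐv) (∂_b v)` is
symmetric in `a, b` for every real bilinear `B`. For `C²` maps that symmetry is two integrations
by parts; for `C¹` maps it is obtained by integrating by parts against difference quotients and
passing to the limit.
-/

open scoped InnerProductSpace

theorem norm_smul_inv_sub_le_of_norm_fderiv_le {V F : Type*} [NormedAddCommGroup V]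
    [NormedSpace ℝ V] [NormedAddCommGroup F] [NormedSpace ℝ F] {v : V → F}
    (hv : Differentiable ℝ v) {M : ℝ} (hM : ∀ x, ‖fderiv ℝ v x‖ ≤ M) (x b : V) (t : ℝ) :
    ‖t⁻¹ • (v (x + t • b) - v x)‖ ≤ M * ‖b‖ := by
  have hM0 : 0 ≤ M := (norm_nonneg _).trans (hM x)
  have hlip := convex_univ.norm_image_sub_le_of_norm_fderiv_le (fun y _ => hv y) (fun y _ => hM y)
    (Set.mem_univ x) (Set.mem_univ (x + t • b))
  rw [add_sub_cancel_left, norm_smul] at hlip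
  rw [norm_smul, norm_inv]
  rcases eq_or_ne t 0 with rfl | ht
  · simp only [norm_zero, inv_zero, zero_mul]
    positivity
  · calc ‖t‖⁻¹ * ‖v (x + t • b) - v x‖ ≤ ‖t‖⁻¹ * (M * (‖t‖ * ‖b‖)) := by gcongr
      _ = M * ‖b‖ := by field_simp

theorem Continuous.integrable_norm_sq_of_hasCompactSupport {V F : Type*} [TopologicalSpace V]
    [MeasurableSpace V] [OpensMeasurableSpace V] {μ : Measure V} [IsFiniteMeasureOnCompacts μ]
    [NormedAddCommGroup F] {f : V → F} (hf : Continuous f) (hfs : HasCompactSupport f) :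
    Integrable (fun x => ‖f x‖ ^ 2) μ := by
  have h : HasCompactSupport fun x => ‖f x‖ ^ 2 :=
    hfs.comp_left (g := fun y : F => ‖y‖ ^ 2) (by simp)
  exact (hf.norm.pow 2).integrable_of_hasCompactSupport h

section IntegrationByParts

variable {V F G W : Type*} [NormedAddCommGroup V] [MeasurableSpace V] [BorelSpace V]
  {μ : Measure V} [NormedAddCommGroup F] [NormedSpace ℝ F] [NormedAddCommGroup G]
  [NormedSpace ℝ G] [NormedAddCommGroup W] [NormedSpace ℝ W]

theorem integrable_bilinear_of_hasCompactSupport_left [IsFiniteMeasureOnCompacts μ]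
    (B : F →L[ℝ] G →L[ℝ] W) {f : V → F} {g : V → G} (hf : Continuous f) (hg : Continuous g)
    (hfs : HasCompactSupport f) : Integrable (fun x => B (f x) (g x)) μ :=
  (B.continuous₂.comp₂ hf hg).integrable_of_hasCompactSupport
    (hfs.mono fun x hx hfx => hx (by simp [hfx]))

theorem integrable_bilinear_of_hasCompactSupport_right [IsFiniteMeasureOnCompacts μ]
    (B : F →L[ℝ] G →L[ℝ] W) {f : V → F} {g : V → G} (hf : Continuous f) (hg : Continuous g)
    (hgs : HasCompactSupport g) : Integrable (fun x => B (f x) (g x)) μ :=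
  integrable_bilinear_of_hasCompactSupport_left B.flip hg hf hgs

theorem tendsto_integral_bilinear_of_tendsto_of_bounded [IsFiniteMeasureOnCompacts μ]
    {ι : Type*} {l : Filter ι} [l.IsCountablyGenerated] (B : F →L[ℝ] G →L[ℝ] W) {f : V → F}
    (hf : Continuous f) (hfs : HasCompactSupport f) {g : ι → V → G} {g₀ : V → G} {M : ℝ}
    (hgc : ∀ᶠ i in l, Continuous (g i)) (hgM : ∀ᶠ i in l, ∀ x, ‖g i x‖ ≤ M)
    (hg : ∀ x, Tendsto (fun i => g i x) l (𝓝 (g₀ x))) :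
    Tendsto (fun i => ∫ x, B (f x) (g i x) ∂μ) l (𝓝 (∫ x, B (f x) (g₀ x) ∂μ)) := by
  refine tendsto_integral_filter_of_dominated_convergence (fun x => ‖B‖ * ‖f x‖ * M) ?_ ?_ ?_
    (ae_of_all _ fun x => ((B (f x)).continuous.tendsto _).comp (hg x))
  · filter_upwards [hgc] with i hi
      using (integrable_bilinear_of_hasCompactSupport_left B hf hi hfs).aestronglyMeasurable
  · filter_upwards [hgM] with i hi
    exact ae_of_all _ fun x => (B.le_opNorm₂ _ _).trans (by gcongr; exact hi x)
  · exact ((continuous_const.mul hf.norm).mul continuous_const).integrable_of_hasCompactSupport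
      (hfs.norm.mul_left.mul_right)

variable [NormedSpace ℝ V] [FiniteDimensional ℝ V] [μ.IsAddHaarMeasure]

theorem integral_bilinear_fderiv_right_eq_neg_left_of_hasCompactSupport
    (B : F →L[ℝ] G →L[ℝ] W) {f : V → F} {g : V → G} (hf : ContDiff ℝ 1 f) (hg : ContDiff ℝ 1 g)
    (hfs : HasCompactSupport f) (w : V) :
    ∫ x, B (f x) (fderiv ℝ g x w) ∂μ = -∫ x, B (fderiv ℝ f x w) (g x) ∂μ :=
  integral_bilinear_fderiv_right_eq_neg_left_of_integrable
    (integrable_bilinear_of_hasCompactSupport_left B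
      ((hf.continuous_fderiv one_ne_zero).clm_apply continuous_const) hg.continuous
      (hfs.fderiv_apply (𝕜 := ℝ) w))
    (integrable_bilinear_of_hasCompactSupport_left B hf.continuous
      ((hg.continuous_fderiv one_ne_zero).clm_apply continuous_const) hfs)
    (integrable_bilinear_of_hasCompactSupport_left B hf.continuous hg.continuous hfs)
    (fun x _ => hf.differentiable one_ne_zero x) (fun x _ => hg.differentiable one_ne_zero x)

theorem integral_bilinear_fderiv_forward_diff_eq_backward_diff (B : F →L[ℝ] F →L[ℝ] W) {v : V → F}
    (hv : ContDiff ℝ 1 v) (hvs : HasCompactSupport v) (a c : V) :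
    ∫ x, B (fderiv ℝ v x a) (v (x + c) - v x) ∂μ
      = ∫ x, B (v x - v (x - c)) (fderiv ℝ v x a) ∂μ := by
  have hv' : Continuous fun x => fderiv ℝ v x a :=
    (hv.continuous_fderiv one_ne_zero).clm_apply continuous_const
  have hvs' : HasCompactSupport fun x => fderiv ℝ v x a := hvs.fderiv_apply (𝕜 := ℝ) a
  have shifted : ∫ x, B (fderiv ℝ v x a) (v (x + c)) ∂μ
      = -∫ x, B (v (x - c)) (fderiv ℝ v x a) ∂μ := by
    have ibp := integral_bilinear_fderiv_right_eq_neg_left_of_hasCompactSupport (μ := μ) B hv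
      (hv.comp (contDiff_id.add contDiff_const) : ContDiff ℝ 1 fun x => v (x + c)) hvs a
    rw [← integral_add_right_eq_self (fun x => B (v (x - c)) (fderiv ℝ v x a)) c]
    simp only [Function.comp_def, fderiv_comp_add_right, add_sub_cancel_right] at ibp ⊢
    rw [ibp, neg_neg]
  have unshifted := integral_bilinear_fderiv_right_eq_neg_left_of_hasCompactSupport (μ := μ) B
    hv hv hvs a
  have hvc : Continuous v := hv.continuous
  simp only [map_sub, sub_apply]
  rw [integral_sub (integrable_bilinear_of_hasCompactSupport_left B hv' (by fun_prop) hvs')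
      (integrable_bilinear_of_hasCompactSupport_left B hv' hvc hvs'),
    integral_sub (integrable_bilinear_of_hasCompactSupport_right B hvc hv' hvs')
      (integrable_bilinear_of_hasCompactSupport_right B (by fun_prop) hv' hvs'),
    shifted, unshifted]
  abel

theorem integral_bilinear_fderiv_fderiv_comm (B : F →L[ℝ] F →L[ℝ] W) {v : V → F}
    (hv : ContDiff ℝ 1 v) (hvs : HasCompactSupport v) (a b : V) :
    ∫ x, B (fderiv ℝ v x a) (fderiv ℝ v x b) ∂μ = ∫ x, B (fderiv ℝ v x b) (fderiv ℝ v x a) ∂μ := by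
  have hvd : Differentiable ℝ v := hv.differentiable one_ne_zero
  have hvc : Continuous v := hv.continuous
  have hv' : Continuous fun x => fderiv ℝ v x a :=
    (hv.continuous_fderiv one_ne_zero).clm_apply continuous_const
  obtain ⟨M, hM⟩ := (hvs.fderiv (𝕜 := ℝ)).exists_bound_of_continuous
    (hv.continuous_fderiv one_ne_zero)
  have hslope : ∀ x w, Tendsto (fun t : ℝ => t⁻¹ • (v (x + t • w) - v x)) (𝓝[≠] 0)
      (𝓝 (fderiv ℝ v x w)) := fun x w =>
    ((hvd x).hasFDerivAt.hasLineDerivAt w).tendsto_slope_zero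
  have forward := tendsto_integral_bilinear_of_tendsto_of_bounded (μ := μ) B hv'
    (hvs.fderiv_apply (𝕜 := ℝ) a) (g := fun t x => t⁻¹ • (v (x + t • b) - v x))
    (Eventually.of_forall fun t => by fun_prop)
    (Eventually.of_forall fun t x => norm_smul_inv_sub_le_of_norm_fderiv_le hvd hM x b t)
    fun x => hslope x b
  have hback : ∀ (t : ℝ) x, t⁻¹ • (v x - v (x - t • b)) = -(t⁻¹ • (v (x + t • -b) - v x)) := by
    intro t x
    rw [smul_neg, ← sub_eq_add_neg, ← smul_neg, neg_sub]
  have backward := tendsto_integral_bilinear_of_tendsto_of_bounded (μ := μ) B.flip hv'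
    (hvs.fderiv_apply (𝕜 := ℝ) a) (g := fun t x => t⁻¹ • (v x - v (x - t • b)))
    (Eventually.of_forall fun t => (hvc.sub (hvc.comp (continuous_sub_right _))).const_smul _)
    (M := M * ‖b‖) (Eventually.of_forall fun t x => by
      rw [hback, norm_neg, ← norm_neg b]
      exact norm_smul_inv_sub_le_of_norm_fderiv_le hvd hM x (-b) t)
    fun x => by simpa only [hback, map_neg, neg_neg] using (hslope x (-b)).neg
  refine tendsto_nhds_unique (forward.congr fun t => ?_) backward
  simp only [map_smul, ContinuousLinearMap.flip_apply, integral_smul]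
  rw [integral_bilinear_fderiv_forward_diff_eq_backward_diff B hv hvs a (t • b)]

end IntegrationByParts

theorem neg_two_mul_re_inner_mul_le {𝕜 E : Type*} [RCLike 𝕜] [NormedAddCommGroup E]
    [InnerProductSpace 𝕜 E] (p q : E) {s R : ℝ} (hs : |s| ≤ R) :
    -(2 * RCLike.re ⟪p, q⟫_𝕜 * s) ≤ 2⁻¹ * ‖p‖ ^ 2 + 2 * R ^ 2 * ‖q‖ ^ 2 := by
  have hre := (RCLike.abs_re_le_norm ⟪p, q⟫_𝕜).trans (norm_inner_le_norm p q)
  nlinarith [abs_le.mp hre, abs_le.mp hs, abs_nonneg s, sq_nonneg (‖p‖ - 2 * R * ‖q‖),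
    mul_nonneg (norm_nonneg p) (norm_nonneg q)]

section Poincare

variable {V E : Type*} [NormedAddCommGroup V] [NormedSpace ℝ V] [NormedAddCommGroup E]
  [NormedSpace ℝ E]

theorem fderiv_fun_norm_sq_apply {𝕜 : Type*} [RCLike 𝕜] [InnerProductSpace 𝕜 E]
    [IsScalarTower ℝ 𝕜 E] {v : V → E} {x : V} (hv : DifferentiableAt ℝ v x) (w : V) :
    fderiv ℝ (fun x => ‖v x‖ ^ 2) x w = 2 * RCLike.re ⟪v x, fderiv ℝ v x w⟫_𝕜 := by
  have h : (fun x => ‖v x‖ ^ 2) = fun x => RCLike.re ⟪v x, v x⟫_𝕜 := by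
    ext x; exact (inner_self_eq_norm_sq (v x)).symm
  have hd : HasFDerivAt (fun x => RCLike.re ⟪v x, v x⟫_𝕜) _ x :=
    RCLike.reCLM.hasFDerivAt.comp x (hv.hasFDerivAt.inner 𝕜 hv.hasFDerivAt)
  rw [h, hd.fderiv]
  simp [fderivInnerCLM_apply, inner_re_symm (𝕜 := 𝕜) (fderiv ℝ v x w)]
  ring

variable [FiniteDimensional ℝ V] [MeasurableSpace V] [BorelSpace V] {μ : Measure V}
  [μ.IsAddHaarMeasure]

theorem integral_norm_sq_le_of_abs_le_on_tsupport (𝕜 : Type*) [RCLike 𝕜]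
    [InnerProductSpace 𝕜 E] [IsScalarTower ℝ 𝕜 E] {v : V → E} (hv : ContDiff ℝ 1 v)
    (hvs : HasCompactSupport v) (ℓ : V →L[ℝ] ℝ) {a : V} (ha : ℓ a = 1) {R : ℝ}
    (hR : ∀ x ∈ tsupport v, |ℓ x| ≤ R) :
    ∫ x, ‖v x‖ ^ 2 ∂μ ≤ 4 * R ^ 2 * ∫ x, ‖fderiv ℝ v x a‖ ^ 2 ∂μ := by
  have hn : ContDiff ℝ 1 fun x => ‖v x‖ ^ 2 := hv.norm_sq 𝕜
  have hns : HasCompactSupport fun x => ‖v x‖ ^ 2 :=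
    hvs.comp_left (g := fun y => ‖y‖ ^ 2) (by simp)
  have ibp := integral_bilinear_fderiv_right_eq_neg_left_of_hasCompactSupport (μ := μ)
    (ContinuousLinearMap.mul ℝ ℝ) hn ℓ.contDiff hns a
  simp only [ContinuousLinearMap.mul_apply', ContinuousLinearMap.fderiv, ha, mul_one] at ibp
  have hint_v : Integrable (fun x => ‖v x‖ ^ 2) μ :=
    hv.continuous.integrable_norm_sq_of_hasCompactSupport hvs
  have hva : Continuous fun x => fderiv ℝ v x a :=
    (hv.continuous_fderiv one_ne_zero).clm_apply continuous_const
  have hint_va : Integrable (fun x => ‖fderiv ℝ v x a‖ ^ 2) μ :=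
    hva.integrable_norm_sq_of_hasCompactSupport (hvs.fderiv_apply (𝕜 := ℝ) a)
  have hint : Integrable (fun x => -(fderiv ℝ (fun x => ‖v x‖ ^ 2) x a * ℓ x)) μ :=
    (integrable_bilinear_of_hasCompactSupport_left (ContinuousLinearMap.mul ℝ ℝ)
      ((hn.continuous_fderiv one_ne_zero).clm_apply continuous_const) ℓ.continuous
      (hns.fderiv_apply (𝕜 := ℝ) a)).neg
  have pointwise : ∀ x, -(fderiv ℝ (fun x => ‖v x‖ ^ 2) x a * ℓ x)
      ≤ 2⁻¹ * ‖v x‖ ^ 2 + 2 * R ^ 2 * ‖fderiv ℝ v x a‖ ^ 2 := by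
    intro x
    rw [fderiv_fun_norm_sq_apply (𝕜 := 𝕜) ((hv.differentiable one_ne_zero) x)]
    by_cases hx : v x = 0
    · simp only [hx, inner_zero_left, map_zero, mul_zero, zero_mul, neg_zero, norm_zero]
      positivity
    exact neg_two_mul_re_inner_mul_le _ _ (hR x (subset_tsupport v hx))
  have key := calc
    ∫ x, ‖v x‖ ^ 2 ∂μ = ∫ x, -(fderiv ℝ (fun x => ‖v x‖ ^ 2) x a * ℓ x) ∂μ := by
        rw [ibp, integral_neg]
    _ ≤ ∫ x, (2⁻¹ * ‖v x‖ ^ 2 + 2 * R ^ 2 * ‖fderiv ℝ v x a‖ ^ 2) ∂μ :=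
        integral_mono hint ((hint_v.const_mul _).add (hint_va.const_mul _)) pointwise
    _ = 2⁻¹ * ∫ x, ‖v x‖ ^ 2 ∂μ + 2 * R ^ 2 * ∫ x, ‖fderiv ℝ v x a‖ ^ 2 ∂μ := by
        rw [integral_add (hint_v.const_mul _) (hint_va.const_mul _), integral_const_mul,
          integral_const_mul]
  linarith

end Poincare

theorem ContDiff.smul_of_contDiffAt_tsupport {V 𝕜' E : Type*} [NormedAddCommGroup V]
    [NormedSpace ℝ V] [NormedField 𝕜'] [NormedAlgebra ℝ 𝕜'] [NormedAddCommGroup E]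
    [NormedSpace 𝕜' E] [NormedSpace ℝ E] [IsScalarTower ℝ 𝕜' E] {n : WithTop ℕ∞} {φ : V → 𝕜'}
    {u : V → E} (hu : ContDiff ℝ n u) (hφ : ∀ x ∈ tsupport u, ContDiffAt ℝ n φ x) :
    ContDiff ℝ n fun x => φ x • u x := by
  refine contDiff_iff_contDiffAt.mpr fun x => ?_
  by_cases hx : x ∈ tsupport u
  · exact (hφ x hx).smul hu.contDiffAt
  · refine (contDiffAt_const (c := (0 : E))).congr_of_eventuallyEq ?_
    filter_upwards [notMem_tsupport_iff_eventuallyEq.mp hx] with y hy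
    simp [hy]

section Wirtinger

variable {E : Type*} [NormedAddCommGroup E] [NormedSpace ℂ E]

noncomputable def dz (u : ℂ → E) (z : ℂ) : E :=
  (2⁻¹ : ℝ) • (fderiv ℝ u z 1 - I • fderiv ℝ u z I)

theorem fderiv_apply_one_eq_dz_add_dbar (u : ℂ → E) (z : ℂ) :
    fderiv ℝ u z 1 = dz u z + dbar u z := by
  rw [dz, dbar, ← smul_add, sub_add_add_cancel, ← two_smul ℝ, smul_smul]
  norm_num

theorem support_dbar_subset (u : ℂ → E) : Function.support (dbar u) ⊆ tsupport u := by
  intro z hz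
  by_contra h
  simp [dbar, fderiv_of_notMem_tsupport ℝ h] at hz

theorem support_dz_subset (u : ℂ → E) : Function.support (dz u) ⊆ tsupport u := by
  intro z hz
  by_contra h
  simp [dz, fderiv_of_notMem_tsupport ℝ h] at hz

theorem ContDiff.continuous_dz {u : ℂ → E} (hu : ContDiff ℝ 1 u) : Continuous (dz u) := by
  have := hu.continuous_fderiv one_ne_zero
  unfold dz; fun_prop

theorem ContDiff.continuous_dbar {u : ℂ → E} (hu : ContDiff ℝ 1 u) : Continuous (dbar u) := by
  have := hu.continuous_fderiv one_ne_zero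
  unfold dbar; fun_prop

theorem dbar_smul_of_differentiableAt {φ : ℂ → ℂ} {u : ℂ → E} {z : ℂ}
    (hφ : DifferentiableAt ℂ φ z) (hu : DifferentiableAt ℝ u z) :
    dbar (fun w => φ w • u w) z = φ z • dbar u z := by
  have hφℝ := hφ.hasDerivAt.hasFDerivAt.restrictScalars ℝ
  rw [dbar, dbar, (hφℝ.fun_smul hu.hasFDerivAt).fderiv]
  simp only [add_apply, FunLike.coe_smul, Pi.smul_apply, ContinuousLinearMap.smulRight_apply,
    ContinuousLinearMap.coe_restrictScalars', ContinuousLinearMap.toSpanSingleton_apply,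
    smul_eq_mul]
  -- the terms with `deriv φ z` cancel because `1 + I * I = 0`
  match_scalars <;> ring_nf
  simp

theorem norm_inv_pow_smul_sq (z : ℂ) (N : ℕ) (w : E) :
    ‖(z ^ N)⁻¹ • w‖ ^ 2 = ‖w‖ ^ 2 / ‖z‖ ^ (2 * N) := by
  rw [norm_smul, norm_inv, norm_pow, mul_pow, inv_pow, ← pow_mul, mul_comm N 2, div_eq_inv_mul]

end Wirtinger

section WirtingerL2

variable {E : Type*} [NormedAddCommGroup E] [InnerProductSpace ℂ E]

theorem norm_dbar_sq_sub_norm_dz_sq (u : ℂ → E) (z : ℂ) :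
    ‖dbar u z‖ ^ 2 - ‖dz u z‖ ^ 2 = -im ⟪fderiv ℝ u z 1, fderiv ℝ u z I⟫_ℂ := by
  have h : ∀ w : E, ‖(2⁻¹ : ℝ) • w‖ ^ 2 = 4⁻¹ * ‖w‖ ^ 2 := fun w => by
    rw [norm_smul]; norm_num; ring
  rw [dbar, dz, h, h, norm_add_sq (𝕜 := ℂ), norm_sub_sq (𝕜 := ℂ), inner_smul_right]
  simp
  ring

theorem integral_im_inner_fderiv_one_fderiv_I_eq_zero {v : ℂ → E} (hv : ContDiff ℝ 1 v)
    (hvs : HasCompactSupport v) : ∫ z, im ⟪fderiv ℝ v z 1, fderiv ℝ v z I⟫_ℂ = 0 := by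
  let B : E →L[ℝ] E →L[ℝ] ℝ := ContinuousLinearMap.compL ℝ E ℂ ℝ imCLM ∘L
    (isBoundedBilinearMap_inner (𝕜 := ℂ) (E := E)).toContinuousLinearMap
  have hsymm := integral_bilinear_fderiv_fderiv_comm (μ := volume) B hv hvs 1 I
  have hB : ∀ x y : E, B x y = im ⟪x, y⟫_ℂ := fun _ _ => rfl
  have hanti : ∀ x y : E, im ⟪y, x⟫_ℂ = -im ⟪x, y⟫_ℂ := fun x y => by
    rw [← inner_conj_symm, conj_im]
  simp only [hB, hanti (fderiv ℝ v _ 1), integral_neg] at hsymm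
  exact CharZero.eq_neg_self_iff.mp hsymm

theorem integral_norm_sq_dz_eq_integral_norm_sq_dbar {v : ℂ → E} (hv : ContDiff ℝ 1 v)
    (hvs : HasCompactSupport v) : ∫ z, ‖dz v z‖ ^ 2 = ∫ z, ‖dbar v z‖ ^ 2 := by
  have hdiff := integral_sub
    (hv.continuous_dbar.integrable_norm_sq_of_hasCompactSupport (hvs.mono' (support_dbar_subset v)))
    (hv.continuous_dz.integrable_norm_sq_of_hasCompactSupport (hvs.mono' (support_dz_subset v)))
    (μ := volume)
  simp only [norm_dbar_sq_sub_norm_dz_sq, integral_neg,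
    integral_im_inner_fderiv_one_fderiv_I_eq_zero hv hvs, neg_zero] at hdiff
  linarith

theorem integral_norm_sq_le_sixteen_mul_integral_norm_sq_dbar {v : ℂ → E} (hv : ContDiff ℝ 1 v)
    (hvs : HasCompactSupport v) (hsupp : tsupport v ⊆ ball 0 1) :
    ∫ z, ‖v z‖ ^ 2 ≤ 16 * ∫ z, ‖dbar v z‖ ^ 2 := by
  have poincare := integral_norm_sq_le_of_abs_le_on_tsupport ℂ (μ := volume) hv hvs reCLM
    (a := 1) (by simp) (R := 1) fun z hz =>
      (abs_re_le_norm z).trans (mem_ball_zero_iff.mp (hsupp hz)).le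
  have hint_dz := hv.continuous_dz.integrable_norm_sq_of_hasCompactSupport
    (hvs.mono' (support_dz_subset v)) (μ := volume)
  have hint_dbar := hv.continuous_dbar.integrable_norm_sq_of_hasCompactSupport
    (hvs.mono' (support_dbar_subset v)) (μ := volume)
  have hint_one : Integrable (fun z => ‖fderiv ℝ v z 1‖ ^ 2) :=
    ((hv.continuous_fderiv one_ne_zero).clm_apply continuous_const)
      |>.integrable_norm_sq_of_hasCompactSupport (hvs.fderiv_apply (𝕜 := ℝ) 1)
  have hsplit : ∫ z, ‖fderiv ℝ v z 1‖ ^ 2 ≤ ∫ z, (2 * ‖dz v z‖ ^ 2 + 2 * ‖dbar v z‖ ^ 2) :=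
    integral_mono hint_one ((hint_dz.const_mul 2).add (hint_dbar.const_mul 2)) fun z => by
      rw [fderiv_apply_one_eq_dz_add_dbar]
      nlinarith [norm_add_le (dz v z) (dbar v z), norm_nonneg (dz v z + dbar v z),
        sq_nonneg (‖dz v z‖ - ‖dbar v z‖)]
  rw [integral_add (hint_dz.const_mul 2) (hint_dbar.const_mul 2), integral_const_mul,
    integral_const_mul, integral_norm_sq_dz_eq_integral_norm_sq_dbar hv hvs] at hsplit
  linarith

end WirtingerL2

/-- there is `K > 0`, independent of `N`, such that for every `N ≥ 1`
and every `C¹` map `u : ℂ → ℂⁿ` compactly supported in `D \ {0}`,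
`∫_D ‖∂u/∂z̄‖² |z|^{-2N} ≥ K ∫_D ‖u‖² |z|^{-2N}`. -/
theorem carleman_power_weights (n : ℕ) :
    ∃ K : ℝ, 0 < K ∧ ∀ (N : ℕ), 0 < N →
      ∀ (u : ℂ → EuclideanSpace ℂ (Fin n)),
        ContDiff ℝ 1 u → HasCompactSupport u →
        tsupport u ⊆ ball (0 : ℂ) 1 \ {0} →
        K * (∫ z in ball (0 : ℂ) 1, ‖u z‖ ^ 2 / ‖z‖ ^ (2 * N))
          ≤ ∫ z in ball (0 : ℂ) 1, ‖dbar u z‖ ^ 2 / ‖z‖ ^ (2 * N) := by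
  refine ⟨16⁻¹, by norm_num, fun N _ u hu hus hsupp => ?_⟩
  set v : ℂ → EuclideanSpace ℂ (Fin n) := fun z => (z ^ N)⁻¹ • u z with hv_def
  have hv : ContDiff ℝ 1 v := hu.smul_of_contDiffAt_tsupport fun z hz =>
    (((contDiffAt_id (𝕜 := ℂ)).pow N).inv (pow_ne_zero N (hsupp hz).2)).restrict_scalars ℝ
  have hvs : HasCompactSupport v := hus.smul_left (f := fun z : ℂ => (z ^ N)⁻¹)
  have hv_ball : tsupport v ⊆ ball 0 1 :=
    (tsupport_smul_subset_right _ _).trans (hsupp.trans Set.sdiff_subset)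
  have hu_eq : ∫ z in ball (0 : ℂ) 1, ‖u z‖ ^ 2 / ‖z‖ ^ (2 * N) = ∫ z, ‖v z‖ ^ 2 := by
    rw [setIntegral_eq_integral_of_forall_compl_eq_zero fun z hz => ?_]
    · simp only [hv_def, norm_inv_pow_smul_sq]
    · simp [image_eq_zero_of_notMem_tsupport fun h => hz (hsupp h).1]
  have hdbar_eq : ∫ z in ball (0 : ℂ) 1, ‖dbar u z‖ ^ 2 / ‖z‖ ^ (2 * N) = ∫ z, ‖dbar v z‖ ^ 2 := by
    rw [setIntegral_eq_integral_of_forall_compl_eq_zero fun z hz => ?_]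
    · refine integral_congr_ae ((volume.ae_ne 0).mono fun z hz => ?_)
      have hφ : DifferentiableAt ℂ (fun w : ℂ => (w ^ N)⁻¹) z :=
        (differentiableAt_pow N).inv (pow_ne_zero N hz)
      simp only [hv_def, dbar_smul_of_differentiableAt hφ ((hu.differentiable one_ne_zero) z),
        norm_inv_pow_smul_sq]
    · have : dbar u z = 0 := Function.notMem_support.mp fun h =>
        hz (hsupp (support_dbar_subset u h)).1
      simp [this]
  rw [hu_eq, hdbar_eq]
  linarith [integral_norm_sq_le_sixteen_mul_integral_norm_sq_dbar hv hvs hv_ball]
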